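/- With the two-bridge setup over ℂ[u], assume in addition q ≠ ±1, and let k be the unique odd integer with 0 < k < p and kq ≡ ±1 (mod 2p). Set V = G₁^{ε₁} G₂^{ε₂} ⋯ G₁^{ε_{k−2}} G₂^{ε_{k−1}} and Y = G₁^{ε_k} G₂^{ε_{k+1}} ⋯ G₁^{ε_{p−2}} G₂^{ε_{p−1}}, so that W = V·Y. Then there exist s ∈ {1, −1} and a polynomial h ∈ ℂ[u] of degree ≤ (p−1)/2 − 2 such that (Y₂₁ − (d − d⁻¹)Y₂₂)·φ_V = s·d^{−ε_k}·φ_W + h. -/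

import Mathlib

open Matrix Polynomial

/-- `ε_i = (−1)^⌊iq/p⌋`. -/
def eps (p : ℕ) (q : ℤ) (i : ℕ) : ℤ :=
  if ((i : ℤ) * q).fdiv p % 2 = 0 then 1 else -1

/-- `G₁ = [[d, 1], [0, d⁻¹]]` over `ℂ[u]`. -/
noncomputable def G1 (d : ℂ) : Matrix (Fin 2) (Fin 2) (Polynomial ℂ) :=
  !![C d, 1; 0, C d⁻¹]

/-- `G₂ = [[d, 0], [−u, d⁻¹]]` over `ℂ[u]`. -/
noncomputable def G2 (d : ℂ) : Matrix (Fin 2) (Fin 2) (Polynomial ℂ) :=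
  !![C d, 0; -X, C d⁻¹]

/-- The `i`-th letter `G₁^{ε_i}` (for odd `i`) or `G₂^{ε_i}` (for even `i`). -/
noncomputable def letter (p : ℕ) (q : ℤ) (d : ℂ) (i : ℕ) :
    Matrix (Fin 2) (Fin 2) (Polynomial ℂ) :=
  (if i % 2 = 1 then G1 d else G2 d) ^ eps p q i

/-- `W = G₁^{ε₁}·G₂^{ε₂}·⋯·G₁^{ε_{p−2}}·G₂^{ε_{p−1}}`. -/
noncomputable def twoBridgeW (p : ℕ) (q : ℤ) (d : ℂ) :
    Matrix (Fin 2) (Fin 2) (Polynomial ℂ) :=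
  ((List.range (p - 1)).map (fun i => letter p q d (i + 1))).prod

/-- `V = G₁^{ε₁}·G₂^{ε₂}·⋯·G₁^{ε_{k−2}}·G₂^{ε_{k−1}}`. -/
noncomputable def twoBridgeV (p : ℕ) (q : ℤ) (d : ℂ) (k : ℕ) :
    Matrix (Fin 2) (Fin 2) (Polynomial ℂ) :=
  ((List.range (k - 1)).map (fun i => letter p q d (i + 1))).prod

/-- `Y = G₁^{ε_k}·G₂^{ε_{k+1}}·⋯·G₁^{ε_{p−2}}·G₂^{ε_{p−1}}`. -/
noncomputable def twoBridgeY (p : ℕ) (q : ℤ) (d : ℂ) (k : ℕ) :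
    Matrix (Fin 2) (Fin 2) (Polynomial ℂ) :=
  ((List.range (p - k)).map (fun i => letter p q d (i + k))).prod

/-- `φ_Z = Z₁₁ − (d − d⁻¹)Z₁₂`. -/
noncomputable def phi (d : ℂ) (Z : Matrix (Fin 2) (Fin 2) (Polynomial ℂ)) :
    Polynomial ℂ :=
  Z 0 0 - C (d - d⁻¹) * Z 0 1

/-!
Since `kq ≡ ±1 (mod 2p)` and `1 < |q| < p - 1`, the floors `⌊(k - 1)q/p⌋` and `⌊(k + 1)q/p⌋`
have opposite parity, so `ε_{k-1} = -ε_{k+1}`: the letters `G₂^{ε_{k-1}}` and `G₂^{ε_{k+1}}`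
flanking `G₁^{ε_k}` in `W` are mutually inverse. For all `V`, `Y` and `e = ±1` a direct `2 × 2`
computation gives `ψ(G₁^e Y) φ(V) - e d^{-e} φ(V G₁^e Y) = -e φ(V Y)`, where
`ψ_Z = Z₂₁ - (d - d⁻¹) Z₂₂`. With `V = V' G₂^{ε_{k-1}}` and `Y = G₂^{ε_{k+1}} M` this yields
`h = -ε_k φ(V' M)`. The word `V' M` contains only `(p - 5)/2` letters `G₂^{±1}`, the only letters
with entries of positive degree in `u`.
-/

namespace TwoBridge

section Matrices

variable {ι R : Type*} [Fintype ι]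

theorem natDegree_mul_apply_le [Semiring R] {A B : Matrix ι ι R[X]} {m n : ℕ}
    (hA : ∀ i j, (A i j).natDegree ≤ m) (hB : ∀ i j, (B i j).natDegree ≤ n) (i j : ι) :
    ((A * B) i j).natDegree ≤ m + n :=
  natDegree_sum_le_of_forall_le _ _ fun l _ => natDegree_mul_le_of_le (hA i l) (hB l j)

theorem natDegree_zpow_apply_le [DecidableEq ι] [CommRing R] {A : Matrix ι ι R[X]} {e : ℤ}
    {n : ℕ} (he : e = 1 ∨ e = -1) (hA : ∀ i j, (A i j).natDegree ≤ n)
    (hA' : ∀ i j, (A⁻¹ i j).natDegree ≤ n) (i j : ι) : ((A ^ e) i j).natDegree ≤ n := by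
  rcases he with rfl | rfl
  · simpa using hA i j
  · simpa using hA' i j

end Matrices

variable {p : ℕ} {q : ℤ} {d : ℂ}

section Signs

theorem eps_eq_one_or_neg_one (p : ℕ) (q : ℤ) (i : ℕ) : eps p q i = 1 ∨ eps p q i = -1 := by
  unfold eps; split_ifs <;> simp

theorem eps_eq_one_of_mul_eq (hp : 0 < p) {i : ℕ} {m r : ℤ} (h : (i : ℤ) * q = 2 * p * m + r)
    (hr₀ : 0 ≤ r) (hr : r < p) : eps p q i = 1 := by
  have hdiv : ((i : ℤ) * q).fdiv p = 2 * m := by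
    rw [Int.fdiv_eq_ediv_of_nonneg _ (by positivity), h,
      show 2 * (p : ℤ) * m + r = r + p * (2 * m) by ring, Int.add_mul_ediv_left _ _ (by omega),
      Int.ediv_eq_zero_of_lt hr₀ hr, zero_add]
  simp [eps, hdiv]

theorem eps_eq_neg_one_of_mul_eq (hp : 0 < p) {i : ℕ} {m r : ℤ}
    (h : (i : ℤ) * q = 2 * p * m + r) (hr₀ : -p ≤ r) (hr : r < 0) : eps p q i = -1 := by
  have hr' : r / p = -1 := (Int.ediv_eq_iff_of_pos (by positivity)).mpr ⟨by omega, by omega⟩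
  have hdiv : ((i : ℤ) * q).fdiv p = -1 + 2 * m := by
    rw [Int.fdiv_eq_ediv_of_nonneg _ (by positivity), h,
      show 2 * (p : ℤ) * m + r = r + p * (2 * m) by ring, Int.add_mul_ediv_left _ _ (by omega), hr']
  rw [eps, hdiv, if_neg (by omega)]

theorem eps_sub_one_eq_neg_eps_add_one (hp : 0 < p) (hq : 1 < |q|) (hqp : |q| < p - 1) {k : ℕ}
    (hk : 1 ≤ k) {δ : ℤ} (hδ : δ = 1 ∨ δ = -1) (hkδ : (k : ℤ) * q ≡ δ [ZMOD 2 * p]) :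
    eps p q (k - 1) = -eps p q (k + 1) := by
  obtain ⟨m, hm⟩ := hkδ.dvd
  have hlo : ((k - 1 : ℕ) : ℤ) * q = 2 * p * -m + (δ - q) := by
    push_cast [Nat.cast_sub hk]; linear_combination -hm
  have hhi : ((k + 1 : ℕ) : ℤ) * q = 2 * p * -m + (δ + q) := by push_cast; linear_combination -hm
  rcases lt_abs.mp hq with hq₁ | hq₁ <;> obtain ⟨hq₂, hq₃⟩ := abs_lt.mp hqp
  · rw [eps_eq_neg_one_of_mul_eq hp hlo (by omega) (by omega),
      eps_eq_one_of_mul_eq hp hhi (by omega) (by omega)]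
  · rw [eps_eq_one_of_mul_eq hp hlo (by omega) (by omega),
      eps_eq_neg_one_of_mul_eq hp hhi (by omega) (by omega), neg_neg]

theorem three_le_of_mul_modEq (hq : 1 < |q|) (hqp : |q| < p) {k : ℕ} (hk : Odd k) {δ : ℤ}
    (hδ : δ = 1 ∨ δ = -1) (hkδ : (k : ℤ) * q ≡ δ [ZMOD 2 * p]) : 3 ≤ k := by
  obtain ⟨b, rfl⟩ := hk
  by_contra! hk3
  obtain rfl : b = 0 := by omega
  obtain ⟨hq₁, hq₂⟩ := abs_lt.mp hqp
  have hqδ := Int.eq_zero_of_abs_lt_dvd hkδ.dvd (abs_lt.mpr ⟨by omega, by omega⟩)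
  rcases lt_abs.mp hq with hq₃ | hq₃ <;> omega

end Signs

section Letters

theorem det_G1 (hd : d ≠ 0) : (G1 d).det = 1 := by
  simp [G1, det_fin_two_of, ← C_mul, hd]

theorem det_G2 (hd : d ≠ 0) : (G2 d).det = 1 := by
  simp [G2, det_fin_two_of, ← C_mul, hd]

theorem G1_inv (hd : d ≠ 0) : (G1 d)⁻¹ = !![C d⁻¹, -1; 0, C d] := by
  rw [inv_def, det_G1 hd, Ring.inverse_one, one_smul, G1, adjugate_fin_two_of]
  simp

theorem G2_inv (hd : d ≠ 0) : (G2 d)⁻¹ = !![C d⁻¹, 0; X, C d] := by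
  rw [inv_def, det_G2 hd, Ring.inverse_one, one_smul, G2, adjugate_fin_two_of]
  simp

theorem letter_of_odd {i : ℕ} (hi : i % 2 = 1) : letter p q d i = G1 d ^ eps p q i := by
  simp [letter, hi]

theorem letter_of_even {i : ℕ} (hi : i % 2 = 0) : letter p q d i = G2 d ^ eps p q i := by
  simp [letter, hi]

theorem natDegree_letter_apply_of_odd (hd : d ≠ 0) {i : ℕ} (hi : i % 2 = 1) (a b : Fin 2) :
    (letter p q d i a b).natDegree = 0 := by
  rw [letter_of_odd hi, ← Nat.le_zero]
  refine natDegree_zpow_apply_le (eps_eq_one_or_neg_one p q i) ?_ ?_ a b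
  · simp [G1, Fin.forall_fin_two]
  · simp [G1_inv hd, Fin.forall_fin_two]

theorem natDegree_letter_apply_le (hd : d ≠ 0) (i : ℕ) (a b : Fin 2) :
    (letter p q d i a b).natDegree ≤ 1 := by
  rcases Nat.mod_two_eq_zero_or_one i with hi | hi
  · rw [letter_of_even hi]
    refine natDegree_zpow_apply_le (eps_eq_one_or_neg_one p q i) ?_ ?_ a b
    · simp [G2, Fin.forall_fin_two]
    · simp [G2_inv hd, Fin.forall_fin_two]
  · simp [natDegree_letter_apply_of_odd hd hi]

end Letters

section Words

variable (p q d) in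
noncomputable def word (a n : ℕ) : Matrix (Fin 2) (Fin 2) ℂ[X] :=
  ((List.range n).map fun i => letter p q d (i + a)).prod

theorem word_add (a m n : ℕ) :
    word p q d a (m + n) = word p q d a m * word p q d (a + m) n := by
  simp only [word, List.range_add, List.map_append, List.prod_append, List.map_map]
  congr 3
  ext i
  simp only [Function.comp_apply]
  ring_nf

theorem word_succ (a n : ℕ) : word p q d a (n + 1) = word p q d a n * letter p q d (a + n) := by
  rw [word_add]
  simp [word]

theorem word_succ' (a n : ℕ) :
    word p q d a (n + 1) = letter p q d a * word p q d (a + 1) n := by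
  rw [add_comm, word_add]
  simp [word]

theorem natDegree_word_apply_le (hd : d ≠ 0) {a : ℕ} (ha : a % 2 = 1) (n : ℕ) (i j : Fin 2) :
    (word p q d a n i j).natDegree ≤ n / 2 := by
  induction n generalizing i j with
  | zero =>
    simp only [word, List.range_zero, List.map_nil, List.prod_nil, one_apply]
    split_ifs <;> simp
  | succ n ih =>
    rw [word_succ]
    rcases Nat.mod_two_eq_zero_or_one n with hn | hn
    · have := natDegree_mul_apply_le ih (fun a' b' => (natDegree_letter_apply_of_odd (p := p)
        (q := q) hd (by omega : (a + n) % 2 = 1) a' b').le) i j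
      omega
    · have := natDegree_mul_apply_le ih (natDegree_letter_apply_le (p := p) (q := q) hd (a + n)) i j
      omega

theorem twoBridgeW_eq_mul {k : ℕ} (hk : 1 ≤ k) (hkp : k ≤ p) :
    twoBridgeW p q d = twoBridgeV p q d k * twoBridgeY p q d k := by
  change word p q d 1 (p - 1) = word p q d 1 (k - 1) * word p q d k (p - k)
  rw [show p - 1 = (k - 1) + (p - k) by omega, word_add, show 1 + (k - 1) = k by omega]

theorem twoBridgeV_eq {k : ℕ} (hk : 2 ≤ k) :
    twoBridgeV p q d k = word p q d 1 (k - 2) * letter p q d (k - 1) := by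
  change word p q d 1 (k - 1) = _
  rw [show k - 1 = k - 2 + 1 by omega, word_succ, show 1 + (k - 2) = k - 2 + 1 by omega]

theorem twoBridgeY_eq {k n : ℕ} (hk : k % 2 = 1) (hn : p = k + n + 2) :
    twoBridgeY p q d k = G1 d ^ eps p q k * (letter p q d (k + 1) * word p q d (k + 2) n) := by
  change word p q d k (p - k) = _
  rw [show p - k = n + 1 + 1 by omega, word_succ', word_succ', letter_of_odd hk]

end Words

section Riley

noncomputable def psi (d : ℂ) (Z : Matrix (Fin 2) (Fin 2) ℂ[X]) : ℂ[X] :=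
  Z 1 0 - C (d - d⁻¹) * Z 1 1

theorem natDegree_phi_le {Z : Matrix (Fin 2) (Fin 2) ℂ[X]} {n : ℕ}
    (hZ : ∀ i j, (Z i j).natDegree ≤ n) : (phi d Z).natDegree ≤ n :=
  (natDegree_sub_le _ _).trans (max_le (hZ 0 0) ((natDegree_C_mul_le _ _).trans (hZ 0 1)))

theorem psi_G1_zpow_mul_mul_phi_sub (hd : d ≠ 0) {e : ℤ} (he : e = 1 ∨ e = -1)
    (V Y : Matrix (Fin 2) (Fin 2) ℂ[X]) :
    psi d (G1 d ^ e * Y) * phi d V - C (e * d ^ (-e)) * phi d (V * (G1 d ^ e * Y)) =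
      -C (e : ℂ) * phi d (V * Y) := by
  have hC : C d * C d⁻¹ = 1 := by rw [← C_mul, mul_inv_cancel₀ hd, C_1]
  rcases he with rfl | rfl
  · simp only [zpow_one, Int.cast_one, one_mul, _root_.zpow_neg_one, psi, phi, G1, mul_apply,
      Fin.sum_univ_two, of_apply, cons_val', cons_val_zero, cons_val_one, cons_val_fin_one,
      zero_mul, zero_add, map_sub, map_one]
    linear_combination -(V 0 0 * (Y 0 0 - (C d - C d⁻¹) * Y 0 1) +
      V 0 1 * (Y 1 0 - (C d - C d⁻¹) * Y 1 1)) * hC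
  · simp only [_root_.zpow_neg_one, zpow_one, neg_neg, Int.cast_neg, Int.cast_one, neg_one_mul,
      G1_inv hd, psi, phi, mul_apply, Fin.sum_univ_two, of_apply, cons_val', cons_val_zero,
      cons_val_one, cons_val_fin_one, zero_mul, zero_add, map_sub, map_neg, map_one]
    linear_combination (V 0 0 * (Y 0 0 - (C d - C d⁻¹) * Y 0 1) +
      V 0 1 * (Y 1 0 - (C d - C d⁻¹) * Y 1 1)) * hC

theorem psi_twoBridgeY_mul_phi_twoBridgeV (hd : d ≠ 0) {k n : ℕ} (hk3 : 3 ≤ k)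
    (hk : k % 2 = 1) (hn : p = k + n + 2) (heps : eps p q (k - 1) = -eps p q (k + 1)) :
    psi d (twoBridgeY p q d k) * phi d (twoBridgeV p q d k) =
      C (eps p q k * d ^ (-eps p q k)) * phi d (twoBridgeW p q d) -
        C (eps p q k : ℂ) * phi d (word p q d 1 (k - 2) * word p q d (k + 2) n) := by
  set V' := word p q d 1 (k - 2)
  set M := word p q d (k + 2) n
  have hcancel : letter p q d (k - 1) * letter p q d (k + 1) = 1 := by
    rw [letter_of_even (by omega), letter_of_even (by omega), heps]
    exact zpow_neg_mul_zpow_self _ (det_G2 hd ▸ isUnit_one)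
  have hVM : V' * letter p q d (k - 1) * (letter p q d (k + 1) * M) = V' * M := by
    rw [mul_assoc, ← mul_assoc (letter p q d (k - 1)), hcancel, one_mul]
  have key := psi_G1_zpow_mul_mul_phi_sub hd (eps_eq_one_or_neg_one p q k)
    (V' * letter p q d (k - 1)) (letter p q d (k + 1) * M)
  rw [hVM] at key
  rw [twoBridgeW_eq_mul (k := k) (by omega) (by omega), twoBridgeV_eq (by omega),
    twoBridgeY_eq hk hn]
  linear_combination key

end Riley

end TwoBridge

open TwoBridge in
theorem stmt_11_general (p : ℕ) (q : ℤ) (hp : Odd p) (hq : Odd q)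
    (hql : -(p : ℤ) < q) (hqu : q < (p : ℤ))
    (hq1 : q ≠ 1) (hq1' : q ≠ -1)
    (d : ℂ) (hd : d ≠ 0)
    (k : ℕ) (hkp : k < p) (hkodd : Odd k)
    (hk : (k : ℤ) * q ≡ 1 [ZMOD (2 * p)] ∨ (k : ℤ) * q ≡ -1 [ZMOD (2 * p)]) :
    ∃ s : ℤ, (s = 1 ∨ s = -1) ∧
      ∃ h : Polynomial ℂ, h.degree < (((p - 1) / 2 - 1 : ℕ) : WithBot ℕ) ∧
        (twoBridgeY p q d k 1 0 - C (d - d⁻¹) * twoBridgeY p q d k 1 1) *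
            phi d (twoBridgeV p q d k) =
          C ((s : ℂ) * d ^ (-eps p q k)) * phi d (twoBridgeW p q d) + h := by
  obtain ⟨δ, hδ, hkδ⟩ : ∃ δ : ℤ, (δ = 1 ∨ δ = -1) ∧ (k : ℤ) * q ≡ δ [ZMOD 2 * p] := by
    rcases hk with h | h
    exacts [⟨1, .inl rfl, h⟩, ⟨-1, .inr rfl, h⟩]
  have hq_gt : 1 < |q| := lt_abs.mpr (by obtain ⟨t, rfl⟩ := hq; omega)
  have hq_lt : |q| < p - 1 := abs_lt.mpr <| by
    obtain ⟨t, rfl⟩ := hq; obtain ⟨a, rfl⟩ := hp; constructor <;> push_cast <;> omega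
  have hk3 := three_le_of_mul_modEq hq_gt (by linarith) hkodd hδ hkδ
  have heps := eps_sub_one_eq_neg_eps_add_one (by omega) hq_gt hq_lt (by omega) hδ hkδ
  obtain ⟨a, hpa⟩ := hp
  obtain ⟨b, hkb⟩ := hkodd
  have hn : p = k + (p - k - 2) + 2 := by omega
  refine ⟨eps p q k, eps_eq_one_or_neg_one p q k,
    -C (eps p q k : ℂ) * phi d (word p q d 1 (k - 2) * word p q d (k + 2) (p - k - 2)), ?_, ?_⟩
  · have hdeg : (phi d (word p q d 1 (k - 2) * word p q d (k + 2) (p - k - 2))).natDegree ≤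
        (k - 2) / 2 + (p - k - 2) / 2 :=
      natDegree_phi_le (natDegree_mul_apply_le (natDegree_word_apply_le hd rfl _)
        (natDegree_word_apply_le hd (by omega) _))
    refine degree_le_natDegree.trans_lt ?_
    rw [neg_mul, natDegree_neg]
    exact_mod_cast (natDegree_C_mul_le _ _).trans_lt (hdeg.trans_lt (by omega))
  · change psi d _ * _ = _
    rw [psi_twoBridgeY_mul_phi_twoBridgeV hd hk3 (by omega) hn heps]
    ring

theorem stmt_11 (p : ℕ) (q : ℤ) (hp : Odd p) (hq : Odd q)
    (hpq : IsCoprime (p : ℤ) q) (hp3 : 3 ≤ p)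
    (hql : -(p : ℤ) < q) (hqu : q < (p : ℤ))
    (hq1 : q ≠ 1) (hq1' : q ≠ -1)
    (d : ℂ) (hd : d ≠ 0)
    (k : ℕ) (hk0 : 0 < k) (hkp : k < p) (hkodd : Odd k)
    (hk : (k : ℤ) * q ≡ 1 [ZMOD (2 * p)] ∨ (k : ℤ) * q ≡ -1 [ZMOD (2 * p)]) :
    ∃ s : ℤ, (s = 1 ∨ s = -1) ∧
      ∃ h : Polynomial ℂ, h.degree < (((p - 1) / 2 - 1 : ℕ) : WithBot ℕ) ∧
        (twoBridgeY p q d k 1 0 - C (d - d⁻¹) * twoBridgeY p q d k 1 1) *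
            phi d (twoBridgeV p q d k) =
          C ((s : ℂ) * d ^ (-eps p q k)) * phi d (twoBridgeW p q d) + h :=
  stmt_11_general p q hp hq hql hqu hq1 hq1' d hd k hkp hkodd hk
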